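/- arXiv:2502.20338 — 4 statements merged into one kernel-verified Lean document; each statement's English description precedes it below -/
import Mathlib

section
/- Every maximal exact match (MEM) of a pattern P with respect to a text T of length at least L > k is contained in some pseudo-MEM of P, where a pseudo-MEM is a maximal substring of P of length at least L all of whose k-mers are reported present by a k-mer membership filter that has no false negatives for the k-mers of T. -/
open List

variable {α : Type*}

/-- `substr P i j` is the substring `P[i..j]` (inclusive indices). -/
def substr (P : List α) (i j : ℕ) : List α := (P.drop i).take (j - i + 1)

/-- `IsMEM T P i j` : `P[i..j]` is a maximal exact match of `P` w.r.t. `T`: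
it occurs in `T`, and it can be extended neither to the left nor to the right
within `P` while still occurring in `T`. -/
def IsMEM (T P : List α) (i j : ℕ) : Prop :=
  i ≤ j ∧ j < P.length ∧ substr P i j <:+: T ∧
  (i = 0 ∨ ¬ substr P (i - 1) j <:+: T) ∧
  (j = P.length - 1 ∨ ¬ substr P i (j + 1) <:+: T)

/-- All length-`k` substrings (`k`-mers) of `S` pass the filter `F`. -/
def kmersPass (F : List α → Bool) (k : ℕ) (S : List α) : Prop :=
  ∀ w : List α, w.length = k → w <:+: S → F w = true

/-- `IsPseudoMEM F k L P i j` : `P[i..j]` is a maximal substring of `P` of length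
at least `L` all of whose `k`-mers pass the filter `F`. -/
def IsPseudoMEM (F : List α → Bool) (k L : ℕ) (P : List α) (i j : ℕ) : Prop :=
  i ≤ j ∧ j < P.length ∧ L ≤ j - i + 1 ∧ kmersPass F k (substr P i j) ∧
  (i = 0 ∨ ¬ kmersPass F k (substr P (i - 1) j)) ∧
  (j = P.length - 1 ∨ ¬ kmersPass F k (substr P i (j + 1)))

/-- `F` has no false negatives for the `k`-mers of `T`. -/
def NoFalseNeg (F : List α → Bool) (k : ℕ) (T : List α) : Prop :=
  ∀ w : List α, w.length = k → w <:+: T → F w = true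

lemma substr_infix (P : List α) {i j i' j' : ℕ} (hi : i' ≤ i) (hij : i ≤ j) (hj : j ≤ j') :
    substr P i j <:+: substr P i' j' := by
  unfold substr
  have h1 : P.drop i = (P.drop i').drop (i - i') := by
    rw [List.drop_drop]; congr 1; omega
  rw [h1, List.take_drop]
  refine ((List.drop_suffix _ _).isInfix).trans ?_
  exact (List.take_prefix_take_left (by omega)).isInfix

lemma kmersPass_mono (F : List α → Bool) (k : ℕ) {S S' : List α}
    (h : S' <:+: S) (hS : kmersPass F k S) : kmersPass F k S' :=
  fun w hw hinf => hS w hw (hinf.trans h)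

/-- every MEM of `P` w.r.t. `T` of length at least `L > k` is
contained in some pseudo-MEM of `P`. -/
theorem mem_contained_in_pseudoMEM (F : List α → Bool) (k L : ℕ) (T P : List α)
    (hk : 1 ≤ k) (hkL : k < L) (hF : NoFalseNeg F k T)
    (i j : ℕ) (hmem : IsMEM T P i j) (hlen : L ≤ j - i + 1) :
    ∃ i' j', IsPseudoMEM F k L P i' j' ∧ i' ≤ i ∧ j ≤ j' := by
  classical
  obtain ⟨hij, hjP, hinf, _, _⟩ := hmem
  have hP0 : 0 < P.length := lt_of_le_of_lt (Nat.zero_le _) hjP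
  have hpass : kmersPass F k (substr P i j) :=
    fun w hw hw2 => hF w hw (hw2.trans hinf)
  set Q : ℕ → Prop := fun m => kmersPass F k (substr P i m) with hQ
  set j' := Nat.findGreatest Q (P.length - 1) with hj'
  have hjb : j ≤ P.length - 1 := by omega
  have hjj' : j ≤ j' := Nat.le_findGreatest hjb hpass
  have hj'b : j' ≤ P.length - 1 := Nat.findGreatest_le _
  have hQj' : Q j' := Nat.findGreatest_spec hjb hpass
  have hex : ∃ m, kmersPass F k (substr P m j') := ⟨i, hQj'⟩
  set i' := Nat.find hex with hi'
  have hi'i : i' ≤ i := Nat.find_min' hex hQj'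
  refine ⟨i', j', ⟨by omega, by omega, by omega, Nat.find_spec hex, ?_, ?_⟩, hi'i, hjj'⟩
  · rcases Nat.eq_zero_or_pos i' with h0 | h0
    · exact Or.inl h0
    · exact Or.inr (Nat.find_min hex (by omega))
  · rcases eq_or_ne j' (P.length - 1) with h0 | h0
    · exact Or.inl h0
    · refine Or.inr fun hc => ?_
      have hgt : ¬ Q (j' + 1) :=
        Nat.findGreatest_is_greatest (n := P.length - 1) (by omega) (by omega)
      exact hgt (kmersPass_mono F k (substr_infix P hi'i (by omega) le_rfl) hc)
end

section
/- If P[0..e] is the leftmost MEM of P with respect to T and e < |P| - 1, then there exists a MEM of P containing position e + 1, and every MEM other than the leftmost one contains position e + 1 or lies entirely to its right; moreover the second MEM from the left includes position e + 1. -/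
open List

variable {α : Type*}

/-!
The character at `e + 1` occurs in `T`; a longest match extending it is a MEM containing `e + 1`,
and it cannot start at `0`, since a MEM `P[0..j]` with `j > e` would contain the MEM `P[0..e]`.
For the same reason a MEM ending before `e + 1` would nest inside `P[0..e]`, so every other MEM
starting at most at `e + 1` reaches it; the second MEM starts no later than the one found above.
-/

theorem substr_infix_substr (P : List α) {i i' j j' : ℕ} (hi : i ≤ i') (hij' : i' ≤ j')
    (hj : j' ≤ j) : substr P i' j' <:+: substr P i j := by
  have hwindow : substr P i' j' = ((substr P i j).drop (i' - i)).take (j' - i' + 1) := by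
    rw [substr, substr, List.drop_take, List.drop_drop, List.take_take, Nat.add_sub_cancel' hi]
    congr 1
    omega
  rw [hwindow]
  exact (List.take_prefix _ _).isInfix.trans (List.drop_suffix _ _).isInfix

theorem substr_self (P : List α) {n : ℕ} (h : n < P.length) : substr P n n = [P[n]] := by
  rw [substr, Nat.sub_self, List.take_one_drop_eq_of_lt_length h, List.get_eq_getElem]

/-- MEMs cannot nest. -/
theorem IsMEM.eq_of_infix {T P : List α} {i j i' j' : ℕ} (hm : IsMEM T P i j)
    (hi : i' ≤ i) (hj : j ≤ j') (hj' : j' < P.length) (h : substr P i' j' <:+: T) :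
    i' = i ∧ j' = j := by
  obtain ⟨hij, -, -, hleft, hright⟩ := hm
  constructor
  · by_contra hne
    rcases hleft with h0 | hleft
    · omega
    · exact hleft ((substr_infix_substr P (by omega) (by omega) hj).trans h)
  · by_contra hne
    rcases hright with hlast | hright
    · omega
    · exact hright ((substr_infix_substr P hi (by omega) (by omega)).trans h)

/-- A longest extension of the occurrence is maximal on both sides. -/
theorem exists_isMEM_of_infix {T P : List α} {i j : ℕ} (hij : i ≤ j) (hj : j < P.length)
    (h : substr P i j <:+: T) : ∃ i' j', IsMEM T P i' j' ∧ i' ≤ i ∧ j ≤ j' := by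
  classical
  let S := (Finset.range (i + 1) ×ˢ Finset.Ico j P.length).filter
    fun p => substr P p.1 p.2 <:+: T
  have hS : (i, j) ∈ S := by simp [S, hj, h]
  obtain ⟨⟨i', j'⟩, hmem, hlongest⟩ := S.exists_max_image (fun p => p.2 - p.1) ⟨_, hS⟩
  simp only [S, Finset.mem_filter, Finset.mem_product, Finset.mem_range, Finset.mem_Ico] at hmem
  obtain ⟨⟨hi', hj', hj'P⟩, hocc⟩ := hmem
  refine ⟨i', j', ⟨by omega, hj'P, hocc, ?_, ?_⟩, by omega, hj'⟩
  · refine or_iff_not_imp_left.2 fun hi'0 hext => ?_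
    have := hlongest (i' - 1, j') (by simp [S, hext]; omega)
    omega
  · refine or_iff_not_imp_left.2 fun hlast hext => ?_
    have := hlongest (i', j' + 1) (by simp [S, hext]; omega)
    omega

/-- if `P[0..e]` is the leftmost MEM and `e < |P| - 1`, then some
MEM contains position `e + 1`; every MEM other than the leftmost contains
position `e + 1` or lies entirely to its right; and the second MEM from the
left includes position `e + 1`. -/
theorem second_mem_contains_next_position (T P : List α)
    (hchars : ∀ a ∈ P, [a] <:+: T)
    (e : ℕ) (hleft : IsMEM T P 0 e) (he : e < P.length - 1) :
    (∃ i j, IsMEM T P i j ∧ i ≤ e + 1 ∧ e + 1 ≤ j) ∧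
    (∀ i j, IsMEM T P i j → ¬ (i = 0 ∧ j = e) →
      (i ≤ e + 1 ∧ e + 1 ≤ j) ∨ e + 1 < i) ∧
    (∀ i j, IsMEM T P i j → 0 < i →
      (∀ i' j', IsMEM T P i' j' → 0 < i' → i ≤ i') →
      i ≤ e + 1 ∧ e + 1 ≤ j) := by
  have hocc : substr P 0 e <:+: T := hleft.2.2.1
  have hnext : substr P (e + 1) (e + 1) <:+: T := by
    rw [substr_self P (by omega)]
    exact hchars _ (List.getElem_mem _)
  obtain ⟨i₀, j₀, hmem₀, hi₀, hj₀⟩ := exists_isMEM_of_infix le_rfl (by omega) hnext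
  have hothers : ∀ i j, IsMEM T P i j → ¬ (i = 0 ∧ j = e) →
      (i ≤ e + 1 ∧ e + 1 ≤ j) ∨ e + 1 < i := by
    intro i j hmem hne
    by_contra! hcontra
    obtain ⟨hi0, hje⟩ := hmem.eq_of_infix (Nat.zero_le i) (by omega) (by omega) hocc
    exact hne ⟨hi0.symm, hje.symm⟩
  refine ⟨⟨i₀, j₀, hmem₀, hi₀, hj₀⟩, hothers, fun i j hmem hi hfirst => ?_⟩
  have hi₀pos : 0 < i₀ := by
    by_contra! hzero
    obtain rfl : i₀ = 0 := by omega
    have := hleft.eq_of_infix le_rfl (by omega) hmem₀.2.1 hmem₀.2.2.1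
    omega
  have := hfirst i₀ j₀ hmem₀ hi₀pos
  rcases hothers i j hmem (by omega) with hcontains | hright
  · exact hcontains
  · omega
end

section
/- If the second MEM from the left of P is P[s2..e2] with leftmost MEM P[0..e1], then P[s2..e1+1] occurs in T but P[s2-1..e1+1] does not occur in T; i.e., s2 is the unique position such that P[s2..e1+1] is the longest suffix of P[0..e1+1] occurring in T. -/
open List

variable {α : Type*}

lemma substr_mono (P : List α) {i i' j j' : ℕ} (hi : i' ≤ i) (hj : j ≤ j') (hij : i ≤ j) :
    substr P i j <:+: substr P i' j' := by
  unfold substr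
  have h1 : P.drop i = (P.drop i').drop (i - i') := by
    rw [List.drop_drop]; congr 1; omega
  rw [h1, List.take_drop]
  have h2 : (i - i') + (j - i + 1) = j - i' + 1 := by omega
  rw [h2]
  exact ((List.drop_suffix _ _).isInfix).trans
    (List.take_prefix_take_left (by omega)).isInfix

lemma substr_isInfix (P : List α) (i j : ℕ) : substr P i j <:+: P :=
  ((List.take_prefix _ _).isInfix).trans (List.drop_suffix _ _).isInfix

lemma substr_single (P : List α) {m : ℕ} (hm : m < P.length) :
    substr P m m = [P[m]] := by
  unfold substr
  rw [Nat.sub_self, List.drop_eq_getElem_cons hm]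
  rfl

open Classical in
lemma extend_to_MEM (T P : List α) {a b : ℕ} (hab : a ≤ b) (hb : b < P.length)
    (hocc : substr P a b <:+: T) : ∃ i j, i ≤ a ∧ b ≤ j ∧ IsMEM T P i j := by
  have hex : ∃ i, substr P i b <:+: T := ⟨a, hocc⟩
  set i := Nat.find hex with hi_def
  have hi_le : i ≤ a := Nat.find_le hocc
  have hi_occ : substr P i b <:+: T := Nat.find_spec hex
  set Q : ℕ → Prop := fun j => substr P i j <:+: T with hQ_def
  set j := Nat.findGreatest Q (P.length - 1) with hj_def
  have hj_ge : b ≤ j := Nat.le_findGreatest (by omega) hi_occ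
  have hj_le : j ≤ P.length - 1 := Nat.findGreatest_le _
  have hj_occ : Q j := Nat.findGreatest_spec (P := Q) (by omega) hi_occ
  have hij : i ≤ j := le_trans (le_trans hi_le hab) hj_ge
  have hjlt : j < P.length := by omega
  refine ⟨i, j, hi_le, hj_ge, hij, hjlt, hj_occ, ?_, ?_⟩
  · rcases Nat.eq_zero_or_pos i with h0 | h0
    · exact Or.inl h0
    · refine Or.inr fun hcon => ?_
      have : substr P (i - 1) b <:+: T :=
        (substr_mono P (le_refl _) hj_ge (by omega)).trans hcon
      exact Nat.find_min hex (m := i - 1) (by omega) this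
  · rcases Nat.lt_or_ge j (P.length - 1) with hlt | hge
    · exact Or.inr (Nat.findGreatest_is_greatest (P := Q) (n := P.length - 1) (by omega) (by omega))
    · exact Or.inl (by omega)

/-- if `P[0..e1]` is the leftmost MEM and `P[s2..e2]` is the second
MEM from the left, then `P[s2..e1+1]` occurs in `T` but `P[s2-1..e1+1]` does
not, i.e. `P[s2..e1+1]` is the longest suffix of `P[0..e1+1]` occurring in `T`. -/
theorem second_mem_start_characterization (T P : List α)
    (hchars : ∀ a ∈ P, [a] <:+: T)
    (e1 s2 e2 : ℕ)
    (h1 : IsMEM T P 0 e1) (he1 : e1 < P.length - 1)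
    (h2 : IsMEM T P s2 e2) (hs2 : 0 < s2)
    (hmin : ∀ i j, IsMEM T P i j → 0 < i → s2 ≤ i) :
    substr P s2 (e1 + 1) <:+: T ∧ ¬ substr P (s2 - 1) (e1 + 1) <:+: T := by
  obtain ⟨-, h1len, h1occ, -, h1right⟩ := h1
  obtain ⟨h2le, h2len, h2occ, h2left, -⟩ := h2
  have hlen : e1 + 1 < P.length := by omega
  have hne : ¬ substr P 0 (e1 + 1) <:+: T := by
    rcases h1right with h | h
    · omega
    · exact h
  have h2l : ¬ substr P (s2 - 1) e2 <:+: T := by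
    rcases h2left with h | h
    · omega
    · exact h
  -- e1 < e2
  have he12 : e1 < e2 := by
    by_contra hcon
    push_neg at hcon
    exact h2l ((substr_mono P (Nat.zero_le _) hcon (by omega)).trans h1occ)
  -- s2 ≤ e1 + 1
  have hs2le : s2 ≤ e1 + 1 := by
    by_contra hcon
    push_neg at hcon
    have hm : s2 - 1 < P.length := by omega
    have hocc1 : substr P (s2 - 1) (s2 - 1) <:+: T := by
      rw [substr_single P hm]
      exact hchars _ (List.getElem_mem hm)
    obtain ⟨i, j, hia, hbj, hmem⟩ := extend_to_MEM T P (le_refl (s2 - 1)) hm hocc1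
    rcases Nat.eq_zero_or_pos i with h0 | h0
    · subst h0
      exact hne ((substr_mono P (le_refl 0) (by omega) (by omega)).trans hmem.2.2.1)
    · have := hmin i j hmem h0
      omega
  constructor
  · exact (substr_mono P (le_refl s2) (by omega) hs2le).trans h2occ
  · intro hcon
    obtain ⟨i, j, hia, hbj, hmem⟩ := extend_to_MEM T P (show s2 - 1 ≤ e1 + 1 by omega)
      hlen hcon
    rcases Nat.eq_zero_or_pos i with h0 | h0
    · subst h0
      exact hne ((substr_mono P (le_refl 0) hbj (by omega)).trans hmem.2.2.1)
    · have := hmin i j hmem h0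
      omega
end

section
/- The reverse-complement ntHash rolling recurrence is correct: with H_rc(P[a..a+k-1]) = ⨁_{j=0}^{k-1} rol^{j}(c(P[a+j])), one has ror( H_rc(P[i-1..i+k-2]) ⊕ c(P[i-1]) ⊕ rol^{k}(c(P[i+k-1])) ) = H_rc(P[i..i+k-1]). -/
/-- Cyclic left rotation by one bit on 64-bit words. -/
def rol (x : BitVec 64) : BitVec 64 := x.rotateLeft 1

/-- Cyclic right rotation by one bit on 64-bit words (the inverse of `rol`). -/
def ror (x : BitVec 64) : BitVec 64 := x.rotateRight 1

/-- The reverse-complement ntHash value of the `k`-mer of `P` starting at `a`: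
`H_rc(P[a..a+k-1]) = ⨁_{j=0}^{k-1} rol^{j}(c(P[a+j]))`, where `c` maps each
base to the seed of its complement. -/
def ntHashRC {α : Type*} (c : α → BitVec 64) (P : ℕ → α) (k a : ℕ) : BitVec 64 :=
  ((List.range k).map (fun j => rol^[j] (c (P (a + j))))).foldr (· ^^^ ·) 0

lemma ror_rol (x : BitVec 64) : ror (rol x) = x := by
  unfold ror rol
  ext i hi
  simp only [← BitVec.getLsbD_eq_getElem, BitVec.getLsbD_rotateRight, BitVec.getLsbD_rotateLeft]
  by_cases h : i < 63
  · simp [h, hi, show ¬ 1 + i < 1 from by omega, show 1 + i < 64 from by omega,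
      show 1 + i - 1 = i from by omega]
  · have : i = 63 := by omega
    subst this
    simp

lemma rol_xor (x y : BitVec 64) : rol (x ^^^ y) = rol x ^^^ rol y := by
  unfold rol
  ext i hi
  simp only [← BitVec.getLsbD_eq_getElem, BitVec.getLsbD_xor, BitVec.getLsbD_rotateLeft]
  by_cases h : i < 1
  · simp [h]
  · simp [h, hi]

lemma rol_zero : rol 0#64 = 0#64 := by
  unfold rol
  ext i hi
  simp [← BitVec.getLsbD_eq_getElem, BitVec.getLsbD_rotateLeft]

lemma foldr_xor_init (l : List (BitVec 64)) (b : BitVec 64) :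
    l.foldr (· ^^^ ·) b = l.foldr (· ^^^ ·) 0 ^^^ b := by
  induction l with
  | nil => simp
  | cons x l ih => simp [ih, BitVec.xor_assoc]

lemma ntHashRC_succ_last {α : Type*} (c : α → BitVec 64) (P : ℕ → α) (k a : ℕ) :
    ntHashRC c P (k + 1) a = ntHashRC c P k a ^^^ rol^[k] (c (P (a + k))) := by
  rw [ntHashRC, List.range_succ, List.map_append, List.foldr_append]
  simp only [List.map_cons, List.map_nil, List.foldr_cons, List.foldr_nil, BitVec.xor_zero]
  rw [foldr_xor_init]
  simp [ntHashRC]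

lemma ntHashRC_succ_first {α : Type*} (c : α → BitVec 64) (P : ℕ → α) (k a : ℕ) :
    ntHashRC c P (k + 1) a = c (P a) ^^^ rol (ntHashRC c P k (a + 1)) := by
  induction k generalizing a with
  | zero => simp [ntHashRC, rol_zero, show List.range 1 = [0] from rfl]
  | succ k ih =>
    rw [ntHashRC_succ_last, ih, ntHashRC_succ_last, rol_xor, BitVec.xor_assoc]
    congr 1
    congr 1
    have : a + (k + 1) = (a + 1) + k := by omega
    rw [this, Function.iterate_succ_apply']

/-- correctness of the reverse-complement ntHash rolling
recurrence:
`ror(H_rc(P[i-1..i+k-2]) ⊕ c(P[i-1]) ⊕ rol^k(c(P[i+k-1]))) = H_rc(P[i..i+k-1])`. -/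
theorem ntHashRC_roll {α : Type*} (c : α → BitVec 64) (P : ℕ → α) (k i : ℕ)
    (hk : 1 ≤ k) (hi : 1 ≤ i) :
    ror (ntHashRC c P k (i - 1) ^^^ c (P (i - 1)) ^^^ rol^[k] (c (P (i + k - 1)))) =
      ntHashRC c P k i := by
  obtain ⟨a, rfl⟩ : ∃ a, i = a + 1 := ⟨i - 1, by omega⟩
  have h1 : a + 1 - 1 = a := by omega
  have h2 : a + 1 + k - 1 = a + k := by omega
  rw [h1, h2]
  have key : ntHashRC c P k a ^^^ c (P a) ^^^ rol^[k] (c (P (a + k)))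
      = rol (ntHashRC c P k (a + 1)) := by
    calc ntHashRC c P k a ^^^ c (P a) ^^^ rol^[k] (c (P (a + k)))
        = ntHashRC c P (k + 1) a ^^^ c (P a) := by
          rw [ntHashRC_succ_last]
          rw [BitVec.xor_assoc, BitVec.xor_assoc]
          congr 1
          rw [BitVec.xor_comm]
      _ = rol (ntHashRC c P k (a + 1)) := by
          rw [ntHashRC_succ_first, BitVec.xor_comm, ← BitVec.xor_assoc]
          simp
  rw [key, ror_rol]
end
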